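/- Let T be a continuous linear operator on X. Assume that for every x ∈ X and every ε > 0, there exist a periodic point z of T and an integer n ≥ 1 such that ‖z‖ < ε and ‖Tⁿz − x‖ < ε. Then T is chaotic. -/

import Mathlib

/-!
Periodic points are dense because `Tⁿz` is periodic whenever `z` is. For hypercyclicity it
suffices, by Birkhoff's transitivity theorem (a Baire category argument), that some point near
any `u` has an iterate near any `v`. Take small periodic points `z₁, z₂` with `Tⁿ¹z₁ ≈ u`,
`Tⁿ²z₂ ≈ v` and put `w = Tⁿ¹z₁ + Tˢz₂`, where `s` and `N` are chosen so that
`T^N(Tⁿ¹z₁) = z₁` and `T^N(Tˢz₂) = Tⁿ²z₂`; then `T^N w = z₁ + Tⁿ²z₂ ≈ v`. This is possible with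
`s` below the period of `z₁`, so `z₂`, chosen after `z₁`, can be taken so small that `Tˢz₂` is
negligible and `w ≈ u`.
-/

open Function Set Filter Topology Metric

theorem Function.exists_iterate_eq_of_mem_periodicPts {α : Type*} {f : α → α} {z₁ z₂ : α}
    (h₁ : z₁ ∈ periodicPts f) (h₂ : z₂ ∈ periodicPts f) (n₁ n₂ : ℕ) :
    ∃ s < minimalPeriod f z₁, ∃ N, f^[N] (f^[n₁] z₁) = z₁ ∧ f^[N] (f^[s] z₂) = f^[n₂] z₂ := by
  set p₁ := minimalPeriod f z₁
  set p₂ := minimalPeriod f z₂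
  have hp₁ : 0 < p₁ := minimalPeriod_pos_of_mem_periodicPts h₁
  have hp₂ : 0 < p₂ := minimalPeriod_pos_of_mem_periodicPts h₂
  set s := (n₁ + n₂) % p₁
  have hs : s < p₁ := Nat.mod_lt _ hp₁
  have hsp : s ≤ p₁ * p₂ := hs.le.trans (Nat.le_mul_of_pos_right p₁ hp₂)
  have hdiv : p₁ * ((n₁ + n₂) / p₁) + s = n₁ + n₂ := Nat.div_add_mod _ _
  refine ⟨s, hs, n₂ + p₁ * p₂ - s, ?_, ?_⟩
  · have hN : n₂ + p₁ * p₂ - s + n₁ = p₁ * ((n₁ + n₂) / p₁ + p₂) := by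
      rw [Nat.mul_add]; omega
    rw [← iterate_add_apply, hN]
    exact ((isPeriodicPt_minimalPeriod f z₁).mul_const _).eq
  · have hN : n₂ + p₁ * p₂ - s + s = n₂ + p₂ * p₁ := by rw [Nat.mul_comm p₂ p₁]; omega
    rw [← iterate_add_apply, hN, iterate_add_apply,
      ((isPeriodicPt_minimalPeriod f z₂).mul_const _).eq]

theorem exists_dense_orbit_of_nonempty_inter_preimage_iterate {X : Type*} [TopologicalSpace X]
    [BaireSpace X] [SecondCountableTopology X] [Nonempty X] {f : X → X} (hf : Continuous f)
    (htrans : ∀ U V : Set X, IsOpen U → IsOpen V → U.Nonempty → V.Nonempty →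
      ∃ n, (U ∩ f^[n] ⁻¹' V).Nonempty) :
    ∃ x, Dense (range fun n => f^[n] x) := by
  obtain ⟨B, hBc, hB₀, hB⟩ := TopologicalSpace.exists_countable_basis X
  have hopen : ∀ V ∈ B, IsOpen (⋃ n, f^[n] ⁻¹' V) := fun V hV =>
    isOpen_iUnion fun n => (hf.iterate n).isOpen_preimage V (hB.isOpen hV)
  have hdense : ∀ V ∈ B, Dense (⋃ n, f^[n] ⁻¹' V) := by
    intro V hV
    refine dense_iff_inter_open.2 fun U hU hUne => ?_
    obtain ⟨n, x, hxU, hxV⟩ := htrans U V hU (hB.isOpen hV) hUne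
      (nonempty_iff_ne_empty.2 (ne_of_mem_of_not_mem hV hB₀))
    exact ⟨x, hxU, mem_iUnion.2 ⟨n, hxV⟩⟩
  obtain ⟨x, hx⟩ := (dense_biInter_of_isOpen hopen hBc hdense).nonempty
  refine ⟨x, hB.dense_iff.2 fun V hV _ => ?_⟩
  obtain ⟨n, hn⟩ := mem_iUnion.1 (mem_iInter₂.1 hx V hV)
  exact ⟨f^[n] x, hn, n, rfl⟩

section

variable {R X : Type*} [Semiring R] [SeminormedAddCommGroup X] [Module R X] {T : X →L[R] X}

theorem exists_forall_lt_norm_iterate_lt (p : ℕ) {ε : ℝ} (hε : 0 < ε) :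
    ∃ δ > 0, ∀ y : X, ‖y‖ < δ → ∀ j < p, ‖T^[j] y‖ < ε := by
  have hnhds : ∀ j, T^[j] ⁻¹' ball 0 ε ∈ 𝓝 0 := fun j =>
    (T.continuous.iterate j).continuousAt.preimage_mem_nhds <| by
      rw [iterate_map_zero]; exact ball_mem_nhds 0 hε
  obtain ⟨δ, hδ, hδε⟩ := Metric.eventually_nhds_iff.1 <|
    (eventually_all_finite (finite_Iio p)).2 fun j _ => hnhds j
  exact ⟨δ, hδ, fun y hy j hj => by simpa using hδε (by simpa using hy) j hj⟩

variable (h : ∀ x (ε : ℝ), 0 < ε → ∃ z ∈ periodicPts T, ‖z‖ < ε ∧ ∃ n, ‖T^[n] z - x‖ < ε)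
include h

theorem exists_dist_lt_and_dist_iterate_lt (u v : X) {ε : ℝ} (hε : 0 < ε) :
    ∃ w N, dist w u < ε ∧ dist (T^[N] w) v < ε := by
  obtain ⟨z₁, hz₁, hz₁₀, n₁, hz₁u⟩ := h u (ε / 2) (half_pos hε)
  obtain ⟨δ, hδ, hsmall⟩ := exists_forall_lt_norm_iterate_lt (T := T) (minimalPeriod T z₁)
    (half_pos hε)
  obtain ⟨z₂, hz₂, hz₂₀, n₂, hz₂v⟩ := h v (min δ (ε / 2)) (lt_min hδ (half_pos hε))
  obtain ⟨s, hs, N, hN₁, hN₂⟩ := exists_iterate_eq_of_mem_periodicPts hz₁ hz₂ n₁ n₂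
  refine ⟨T^[n₁] z₁ + T^[s] z₂, N, ?_, ?_⟩
  · calc dist (T^[n₁] z₁ + T^[s] z₂) u = ‖(T^[n₁] z₁ - u) + T^[s] z₂‖ := by
          rw [dist_eq_norm, add_sub_right_comm]
      _ ≤ ‖T^[n₁] z₁ - u‖ + ‖T^[s] z₂‖ := norm_add_le _ _
      _ < ε / 2 + ε / 2 := add_lt_add hz₁u (hsmall z₂ (hz₂₀.trans_le (min_le_left _ _)) s hs)
      _ = ε := add_halves ε
  · calc dist (T^[N] (T^[n₁] z₁ + T^[s] z₂)) v = ‖z₁ + (T^[n₂] z₂ - v)‖ := by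
          rw [iterate_map_add, hN₁, hN₂, dist_eq_norm, add_sub_assoc]
      _ ≤ ‖z₁‖ + ‖T^[n₂] z₂ - v‖ := norm_add_le _ _
      _ < ε / 2 + ε / 2 := add_lt_add hz₁₀ (hz₂v.trans_le (min_le_right _ _))
      _ = ε := add_halves ε

theorem exists_nonempty_inter_preimage_iterate {U V : Set X} (hU : IsOpen U) (hV : IsOpen V)
    (hU₀ : U.Nonempty) (hV₀ : V.Nonempty) : ∃ N, (U ∩ T^[N] ⁻¹' V).Nonempty := by
  obtain ⟨u, hu⟩ := hU₀
  obtain ⟨v, hv⟩ := hV₀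
  obtain ⟨ε₁, hε₁, hU'⟩ := isOpen_iff.1 hU u hu
  obtain ⟨ε₂, hε₂, hV'⟩ := isOpen_iff.1 hV v hv
  obtain ⟨w, N, hwu, hwv⟩ := exists_dist_lt_and_dist_iterate_lt h u v (lt_min hε₁ hε₂)
  exact ⟨N, w, hU' (hwu.trans_le (min_le_left _ _)), hV' (hwv.trans_le (min_le_right _ _))⟩

theorem dense_periodicPts : Dense (periodicPts T) := by
  refine Metric.dense_iff.2 fun x ε hε => ?_
  obtain ⟨z, ⟨m, hm, hz⟩, -, n, hzx⟩ := h x ε hε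
  exact ⟨T^[n] z, by rwa [mem_ball, dist_eq_norm], mk_mem_periodicPts hm (hz.apply_iterate n)⟩

end

theorem statement12 {𝕜 : Type*} [RCLike 𝕜] {X : Type*} [NormedAddCommGroup X]
    [NormedSpace 𝕜 X] [CompleteSpace X] [TopologicalSpace.SeparableSpace X]
    (T : X →L[𝕜] X)
    (h : ∀ (x : X) (ε : ℝ), 0 < ε →
      ∃ (z : X) (n : ℕ), 1 ≤ n ∧ (∃ m : ℕ, 1 ≤ m ∧ (T ^ m) z = z) ∧
        ‖z‖ < ε ∧ ‖(T ^ n) z - x‖ < ε) :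
    (∃ x : X, Dense (Set.range fun n : ℕ => (T ^ n) x)) ∧
    Dense {z : X | ∃ m : ℕ, 1 ≤ m ∧ (T ^ m) z = z} := by
  simp only [FunLike.coe_pow_eq_iterate] at h ⊢
  have hperiodic : {z : X | ∃ m : ℕ, 1 ≤ m ∧ T^[m] z = z} = periodicPts T := rfl
  have h' : ∀ x (ε : ℝ), 0 < ε → ∃ z ∈ periodicPts T, ‖z‖ < ε ∧ ∃ n, ‖T^[n] z - x‖ < ε := by
    intro x ε hε
    obtain ⟨z, n, -, hz, hz₀, hzx⟩ := h x ε hε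
    exact ⟨z, hz, hz₀, n, hzx⟩
  rw [hperiodic]
  exact ⟨exists_dense_orbit_of_nonempty_inter_preimage_iterate T.continuous
    fun U V => exists_nonempty_inter_preimage_iterate h', dense_periodicPts h'⟩
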